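/- Let A be a commutative ring and r_1, r_2 ∈ A such that (r_1 − r_2)^ℓ = 0 for some ℓ ≥ 1. Then in A[[Y]]: (1 − r_1 Y)^{-1}(1 − r_2 Y)^{-1} = Σ_{j=0}^{ℓ−1} (r_1 − r_2)^j Y^j (1 − r_2 Y)^{-(j+2)}. -/

import Mathlib

/-! With `u = 1 - r₂Y` a unit and `d = (r₁ - r₂)Y` nilpotent, `1 - r₁Y = u - d` has the inverse
`∑_{j<ℓ} dʲ u⁻ʲ⁻¹` (a finite geometric series); multiplying by `u⁻¹` gives the identity. -/

open Finset

theorem Ring.inverse_eq_of_mul_eq_one {M₀ : Type*} [CommMonoidWithZero M₀] {a b : M₀}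
    (hab : a * b = 1) : Ring.inverse a = b := by
  rw [← mul_one (Ring.inverse a), Ring.inverse_mul_eq_iff_eq_mul _ _ _ (.of_mul_eq_one b hab), hab]

theorem Ring.inverse_sub_eq_sum_of_pow_eq_zero {R : Type*} [CommRing R] {u d : R} (hu : IsUnit u)
    {n : ℕ} (hd : d ^ n = 0) :
    Ring.inverse (u - d) = ∑ j ∈ range n, d ^ j * Ring.inverse u ^ (j + 1) := by
  set v := Ring.inverse u
  have huv : u * v = 1 := Ring.mul_inverse_cancel u hu
  have hsum : ∑ j ∈ range n, d ^ j * v ^ (j + 1) = v * ∑ j ∈ range n, (d * v) ^ j := by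
    rw [mul_sum]
    exact sum_congr rfl fun j _ => by ring
  apply Ring.inverse_eq_of_mul_eq_one
  calc (u - d) * ∑ j ∈ range n, d ^ j * v ^ (j + 1)
      = (u * v - d * v) * ∑ j ∈ range n, (d * v) ^ j := by rw [hsum]; ring
    _ = 1 := by rw [huv, mul_neg_geom_sum, mul_pow, hd, zero_mul, sub_zero]

theorem PowerSeries.isUnit_one_sub_C_mul_X {A : Type*} [CommRing A] (r : A) :
    IsUnit (1 - C r * X) :=
  isUnit_iff_constantCoeff.mpr (by simp)

open PowerSeries in
theorem stmt_4_general (A : Type*) [CommRing A] (r₁ r₂ : A) (ℓ : ℕ)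
    (h : (r₁ - r₂) ^ ℓ = 0) :
    Ring.inverse (1 - PowerSeries.C r₁ * PowerSeries.X) *
      Ring.inverse (1 - PowerSeries.C r₂ * PowerSeries.X) =
    ∑ j ∈ Finset.range ℓ,
      PowerSeries.C ((r₁ - r₂) ^ j) * PowerSeries.X ^ j *
        Ring.inverse ((1 - PowerSeries.C r₂ * PowerSeries.X) ^ (j + 2)) := by
  have hsplit : 1 - C r₁ * X = (1 - C r₂ * X) - C (r₁ - r₂) * X := by
    rw [map_sub]; ring
  have hd : (C (r₁ - r₂) * X : A⟦X⟧) ^ ℓ = 0 := by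
    rw [mul_pow, ← map_pow, h, map_zero, zero_mul]
  rw [hsplit, Ring.inverse_sub_eq_sum_of_pow_eq_zero (isUnit_one_sub_C_mul_X r₂) hd, sum_mul]
  refine sum_congr rfl fun j _ => ?_
  rw [← Ring.inverse_pow, mul_pow, map_pow]
  ring

open PowerSeries in
theorem stmt_4 (A : Type*) [CommRing A] (r₁ r₂ : A) (ℓ : ℕ) (hℓ : 1 ≤ ℓ)
    (h : (r₁ - r₂) ^ ℓ = 0) :
    Ring.inverse (1 - PowerSeries.C r₁ * PowerSeries.X) *
      Ring.inverse (1 - PowerSeries.C r₂ * PowerSeries.X) =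
    ∑ j ∈ Finset.range ℓ,
      PowerSeries.C ((r₁ - r₂) ^ j) * PowerSeries.X ^ j *
        Ring.inverse ((1 - PowerSeries.C r₂ * PowerSeries.X) ^ (j + 2)) :=
  stmt_4_general A r₁ r₂ ℓ h
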